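/- arXiv:2405.09943 — 2 statements merged into one kernel-verified Lean document; each statement's English description precedes it below -/
import Mathlib

section
/- There exists a distribution F on ℝ with finite second moment and a strictly increasing bounded transformation h : ℝ_{≥0} → ℝ (e.g., h = arctan) such that the transformed squared loss h((y - x)^2) is not consistent for the mean of F: the minimizer of x ↦ E_F[h((Y - x)^2)] differs from E_F[Y]. -/
open MeasureTheory

lemma my_integrable_dirac {f : ℝ → ℝ} (hf : Measurable f) (a : ℝ) :
    Integrable f (Measure.dirac a) := by
  refine ⟨hf.aestronglyMeasurable, ?_⟩
  rw [HasFiniteIntegral, lintegral_dirac' _ (by fun_prop)]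
  exact ENNReal.coe_lt_top

lemma my_integral_mix (f : ℝ → ℝ) (hf : Measurable f) :
    ∫ y, f y ∂((1/2 : ENNReal) • Measure.dirac (0:ℝ) + (1/2 : ENNReal) • Measure.dirac (2:ℝ))
      = (1/2) * f 0 + (1/2) * f 2 := by
  rw [integral_add_measure, integral_smul_measure, integral_smul_measure,
    integral_dirac' _ _ hf.stronglyMeasurable, integral_dirac' _ _ hf.stronglyMeasurable]
  · norm_num
  · exact ((my_integrable_dirac hf _).smul_measure (by norm_num))
  · exact ((my_integrable_dirac hf _).smul_measure (by norm_num))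

/-- A strictly increasing bounded transformation of the squared loss need not remain
consistent for the mean: there exist F with finite second moment and a strictly
isotone bounded h : ℝ₊ → ℝ such that some prediction x has strictly smaller
transformed risk than the mean of F. -/
theorem transformed_squared_loss_not_consistent :
    ∃ F : Measure ℝ, IsProbabilityMeasure F ∧ Integrable (fun y => y ^ 2) F ∧
      ∃ h : ℝ → ℝ, StrictMonoOn h (Set.Ici (0 : ℝ)) ∧
        (∃ M : ℝ, ∀ s ∈ Set.Ici (0 : ℝ), |h s| ≤ M) ∧
        ∃ x : ℝ, ∫ y, h ((y - x) ^ 2) ∂F < ∫ y, h ((y - ∫ y, y ∂F) ^ 2) ∂F := by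
  refine ⟨(1/2 : ENNReal) • Measure.dirac (0:ℝ) + (1/2 : ENNReal) • Measure.dirac (2:ℝ),
    ⟨by simp [ENNReal.inv_two_add_inv_two]⟩, ?_, Real.arctan, ?_, ⟨Real.pi / 2, fun s _ => ?_⟩, 0, ?_⟩
  · refine Integrable.add_measure ?_ ?_ <;>
      exact ((my_integrable_dirac (by fun_prop) _).smul_measure (by norm_num))
  · exact Real.arctan_strictMono.strictMonoOn _
  · rw [abs_le]
    exact ⟨(Real.neg_pi_div_two_lt_arctan s).le, (Real.arctan_lt_pi_div_two s).le⟩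
  · have hmean : (∫ y, y ∂((1/2 : ENNReal) • Measure.dirac (0:ℝ) + (1/2 : ENNReal) • Measure.dirac (2:ℝ))) = 1 := by
      rw [my_integral_mix (fun y => y) measurable_id]; norm_num
    rw [hmean, my_integral_mix (fun y => Real.arctan ((y - 0)^2)) (by exact Real.measurable_arctan.comp (by fun_prop)),
      my_integral_mix (fun y => Real.arctan ((y - 1)^2)) (by exact Real.measurable_arctan.comp (by fun_prop))]
    norm_num [Real.arctan_one, Real.arctan_zero]
    have h4 : Real.arctan 4 < Real.pi / 2 := Real.arctan_lt_pi_div_two 4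
    linarith
end

section
/- Let F have finite second moment and weights w_i ∈ {0,1} be such that w_i = 0 for all contaminated instances and w_i = 1 for at least a fixed positive fraction q > 0 (asymptotically) of the ideal instances, chosen independently of the values Y_i. Then (Σ_i w_i (Y_i - μ)^2)/(Σ_i w_i) still converges almost surely to E_F[(Y - μ)^2], so discarding some clean instances along with all contaminated ones only slows convergence but preserves strict consistency of the squared loss for E_F[Y]. -/
/-!
Since the weights are independent of the clean values `X i = (D i).1`, the joint law of weights
and clean values is a product, so by Fubini it suffices to prove the convergence for every fixed
0/1 weight sequence `v` in which the ones have positive asymptotic density. Such a `v` has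
infinitely many ones, and the weighted mean of the first `n` terms is the plain mean of the first
`count n` terms of the subsequence `X (nth k)` along the ones; this subsequence is again i.i.d.
with law `F`, so the strong law of large numbers applies. Contaminated values never enter, because
their weights vanish.
-/

open MeasureTheory ProbabilityTheory Filter Finset
open scoped ENNReal Topology

theorem Nat.sum_filter_range_eq_sum_range_count_nth {M : Type*} [AddCommMonoid M]
    (p : ℕ → Prop) [DecidablePred p] (a : ℕ → M) (n : ℕ) :
    ∑ i ∈ range n with p i, a i = ∑ k ∈ range (count p n), a (nth p k) := by
  have hcard {k : ℕ} (hk : k < count p n) (hf : (Set.ofPred p).Finite) : k < #hf.toFinset :=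
    hk.trans_le (count_le_card hf n)
  refine sum_nbij' (count p) (nth p) (fun i hi => ?_) (fun k hk => ?_) (fun i hi => ?_)
    (fun k hk => ?_) (fun i hi => ?_)
  · simp only [mem_filter, mem_range] at hi
    exact mem_range.2 (count_strict_mono hi.2 hi.1)
  · rw [mem_range] at hk
    exact mem_filter.2 ⟨mem_range.2 (nth_lt_of_lt_count hk), nth_mem _ (hcard hk)⟩
  · exact nth_count (mem_filter.1 hi).2
  · exact count_nth (hcard (mem_range.1 hk))
  · rw [nth_count (mem_filter.1 hi).2]

theorem Nat.tendsto_count_atTop {p : ℕ → Prop} [DecidablePred p] (hp : {n | p n}.Infinite) :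
    Tendsto (count p) atTop atTop :=
  tendsto_atTop_atTop_of_monotone (count_monotone p) fun k =>
    ⟨nth p k, (count_nth_of_infinite hp k).ge⟩

theorem Finset.sum_mul_eq_sum_filter_of_eq_zero_or_eq_one {ι : Type*} (s : Finset ι)
    {v a : ι → ℝ} (hv : ∀ i, v i = 0 ∨ v i = 1) [DecidablePred fun i => v i = 1] :
    ∑ i ∈ s, v i * a i = ∑ i ∈ s with v i = 1, a i := by
  rw [sum_filter]
  refine sum_congr rfl fun i _ => ?_
  rcases hv i with h | h <;> simp [h]

theorem tendsto_inv_mul_sum_range_of_finite_support {v : ℕ → ℝ}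
    (hv : (Function.support v).Finite) :
    Tendsto (fun n : ℕ => (n : ℝ)⁻¹ * ∑ i ∈ range n, v i) atTop (𝓝 0) := by
  obtain ⟨N, hN⟩ := hv.bddAbove
  have hsum (n : ℕ) (hn : N + 1 ≤ n) : ∑ i ∈ range n, v i = ∑ i ∈ range (N + 1), v i := by
    refine (sum_subset (range_subset_range.2 hn) fun i _ hi => ?_).symm
    exact Function.notMem_support.1 fun hs => hi (mem_range.2 (Nat.lt_succ_of_le (hN hs)))
  have := tendsto_inv_atTop_nhds_zero_nat (𝕜 := ℝ) |>.mul_const (∑ i ∈ range (N + 1), v i)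
  rw [zero_mul] at this
  exact this.congr' (eventually_atTop.2 ⟨N + 1, fun n hn => by simp only [hsum n hn]⟩)

theorem infinite_setOf_eq_one_of_tendsto_avg {v : ℕ → ℝ} (hv : ∀ i, v i = 0 ∨ v i = 1) {c : ℝ}
    (hc : c ≠ 0) (h : Tendsto (fun n : ℕ => (n : ℝ)⁻¹ * ∑ i ∈ range n, v i) atTop (𝓝 c)) :
    {i | v i = 1}.Infinite := by
  intro hfin
  have hsupp : Function.support v = {i | v i = 1} :=
    Set.ext fun i => by rcases hv i with h | h <;> simp [h]
  exact hc (tendsto_nhds_unique h (tendsto_inv_mul_sum_range_of_finite_support (hsupp ▸ hfin)))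

noncomputable def weightedAvg (v a : ℕ → ℝ) (n : ℕ) : ℝ :=
  (∑ i ∈ range n, v i * a i) / ∑ i ∈ range n, v i

theorem weightedAvg_eq_of_eq_zero_or_eq_one {v : ℕ → ℝ} (hv : ∀ i, v i = 0 ∨ v i = 1)
    (a : ℕ → ℝ) (n : ℕ) [DecidablePred fun i => v i = 1] :
    weightedAvg v a n =
      (∑ k ∈ range (Nat.count (fun i => v i = 1) n), a (Nat.nth (fun i => v i = 1) k)) /
        Nat.count (fun i => v i = 1) n := by
  have hden : ∑ i ∈ range n, v i = ∑ i ∈ range n, v i * 1 := by simp only [mul_one]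
  rw [weightedAvg, hden, sum_mul_eq_sum_filter_of_eq_zero_or_eq_one _ hv,
    sum_mul_eq_sum_filter_of_eq_zero_or_eq_one _ hv, Nat.sum_filter_range_eq_sum_range_count_nth,
    Nat.sum_filter_range_eq_sum_range_count_nth]
  simp

theorem strong_law_ae_real_weightedAvg {Ω : Type*} {m : MeasurableSpace Ω} {P : Measure Ω}
    (X : ℕ → Ω → ℝ) (hint : Integrable (X 0) P) (hindep : Pairwise fun i j => X i ⟂ᵢ[P] X j)
    (hident : ∀ i, IdentDistrib (X i) (X 0) P P) {v : ℕ → ℝ} (hv : ∀ i, v i = 0 ∨ v i = 1)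
    (hinf : {i | v i = 1}.Infinite) :
    ∀ᵐ ω ∂P, Tendsto (weightedAvg v fun i => X i ω) atTop (𝓝 P[X 0]) := by
  classical
  set p : ℕ → Prop := fun i => v i = 1
  have hsub := strong_law_ae_real (fun k => X (Nat.nth p k))
    ((hident _).integrable_iff.2 hint)
    (fun k l hkl => hindep ((Nat.nth_injective hinf).ne hkl))
    (fun k => (hident _).trans (hident _).symm)
  rw [(hident _).integral_eq] at hsub
  filter_upwards [hsub] with ω hω
  refine (hω.comp (Nat.tendsto_count_atTop hinf)).congr fun n => ?_
  exact (weightedAvg_eq_of_eq_zero_or_eq_one hv (fun i => X i ω) n).symm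

theorem ae_tendsto_weightedAvg_comp {Ω E : Type*} {m : MeasurableSpace Ω} [MeasurableSpace E]
    {P : Measure Ω} {μ : Measure E} {X : ℕ → Ω → E} (hX : ∀ i, HasLaw (X i) μ P)
    (hindep : iIndepFun X P) {f : E → ℝ} (hf : Measurable f) (hfi : Integrable f μ)
    {v : ℕ → ℝ} (hv : ∀ i, v i = 0 ∨ v i = 1) (hinf : {i | v i = 1}.Infinite) :
    ∀ᵐ ω ∂P, Tendsto (weightedAvg v fun i => f (X i ω)) atTop (𝓝 (∫ x, f x ∂μ)) := by
  rw [← (hX 0).integral_comp hf.aestronglyMeasurable]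
  exact strong_law_ae_real_weightedAvg (fun i => f ∘ X i)
    (((hX 0).map_eq ▸ hfi).comp_aemeasurable (hX 0).aemeasurable)
    (fun i j hij => (hindep.indepFun hij).comp hf hf)
    (fun i => ((hX i).identDistrib (hX 0)).comp hf) hv hinf

theorem ProbabilityTheory.IndepFun.ae_of_ae_ae {Ω α β : Type*} [MeasurableSpace Ω]
    [MeasurableSpace α] [MeasurableSpace β] {P : Measure Ω} [IsFiniteMeasure P]
    {W : Ω → α} {X : Ω → β} (hWX : IndepFun W X P) (hW : Measurable W) (hX : Measurable X)
    {p : α × β → Prop} (hp : MeasurableSet {x | p x}) (h : ∀ᵐ ω ∂P, ∀ᵐ ω' ∂P, p (W ω, X ω')) :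
    ∀ᵐ ω ∂P, p (W ω, X ω) := by
  have hslice (a : α) : MeasurableSet {b | p (a, b)} := measurable_prodMk_left hp
  have hslice_ae : MeasurableSet {a | ∀ᵐ b ∂P.map X, p (a, b)} := by
    simp_rw [ae_iff]
    exact measurable_measure_prodMk_left hp.compl (measurableSet_singleton 0)
  have hmap := (indepFun_iff_map_prod_eq_prod_map_map hW.aemeasurable hX.aemeasurable).1 hWX
  rw [← ae_map_iff (hW.prodMk hX).aemeasurable hp, hmap, Measure.ae_prod_iff_ae_ae hp,
    ae_map_iff hW.aemeasurable hslice_ae]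
  filter_upwards [h] with ω hω
  exact (ae_map_iff hX.aemeasurable (hslice _)).2 hω

theorem measurableSet_setOf_tendsto_weightedAvg {E : Type*} [MeasurableSpace E] {f : E → ℝ}
    (hf : Measurable f) (l : ℝ) :
    MeasurableSet {x : (ℕ → ℝ) × (ℕ → E) |
      Tendsto (weightedAvg x.1 fun i => f (x.2 i)) atTop (𝓝 l)} :=
  measurableSet_tendsto _ fun n => by unfold weightedAvg; fun_prop

/-- Convex-contamination setting with {0,1}-valued weights that vanish on every
contaminated instance, are chosen independently of the ideal (F-component) values,
and keep asymptotically a positive fraction q(1-r) > 0 of the data.  Then the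
weighted empirical squared-loss risk still converges almost surely to E_F[(Y-μ)²],
so strict consistency of the squared loss for E_F[Y] is preserved. -/
theorem partial_trimming_preserves_consistency
    {Ω : Type*} [MeasurableSpace Ω] (P : Measure Ω) [IsProbabilityMeasure P]
    (F G : Measure ℝ) [IsProbabilityMeasure F] [IsProbabilityMeasure G]
    (hF2 : Integrable (fun y => y ^ 2) F)
    (r : ℝ≥0∞) (hr : r ≤ 1) (hr1 : r < 1)
    (D : ℕ → Ω → ℝ × ℝ × Bool)
    (hmeas : ∀ i, Measurable (D i))
    (hlaw : ∀ i, Measure.map (D i) P = F.prod (G.prod ((PMF.bernoulli r.toNNReal (by simpa using ENNReal.toNNReal_mono ENNReal.one_ne_top hr)).toMeasure)))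
    (hindep : iIndepFun D P)
    (Y : ℕ → Ω → ℝ)
    (hY : ∀ i ω, Y i ω = if (D i ω).2.2 then (D i ω).2.1 else (D i ω).1)
    (w : ℕ → Ω → ℝ) (hwmeas : ∀ i, Measurable (w i))
    (hw01 : ∀ i ω, w i ω = 0 ∨ w i ω = 1)
    (hwB : ∀ i ω, (D i ω).2.2 = true → w i ω = 0)
    (hwindep : IndepFun (fun ω => fun i => w i ω) (fun ω => fun i => (D i ω).1) P)
    (q : ℝ) (hq : 0 < q)
    (hfrac : ∀ᵐ ω ∂P, Tendsto
      (fun n : ℕ => (n : ℝ)⁻¹ * ∑ i ∈ Finset.range n, w i ω)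
      atTop (𝓝 (q * (1 - r.toReal)))) :
    ∀ μ : ℝ, ∀ᵐ ω ∂P, Tendsto
      (fun n : ℕ => (∑ i ∈ Finset.range n, w i ω * (Y i ω - μ) ^ 2) /
        (∑ i ∈ Finset.range n, w i ω))
      atTop (𝓝 (∫ y, (y - μ) ^ 2 ∂F)) := by
  intro μ
  have hf : Measurable fun y : ℝ => (y - μ) ^ 2 := by fun_prop
  have hfi : Integrable (fun y : ℝ => (y - μ) ^ 2) F :=
    (((memLp_two_iff_integrable_sq aestronglyMeasurable_id).2 hF2).sub
      (memLp_const μ)).integrable_sq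
  have hX : ∀ i, Measurable fun ω => (D i ω).1 := fun i => measurable_fst.comp (hmeas i)
  have hXlaw (i : ℕ) : HasLaw (fun ω => (D i ω).1) F P :=
    measurePreserving_fst.hasLaw.comp ⟨(hmeas i).aemeasurable, hlaw i⟩
  have hc : q * (1 - r.toReal) ≠ 0 := by
    have : r.toReal < 1 := ENNReal.toReal_lt_of_lt_ofReal (by simpa using hr1)
    exact (mul_pos hq (by linarith)).ne'
  have hclean (i : ℕ) (ω : Ω) : w i ω * (Y i ω - μ) ^ 2 = w i ω * ((D i ω).1 - μ) ^ 2 := by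
    by_cases hB : (D i ω).2.2 = true
    · simp [hwB i ω hB]
    · rw [hY, if_neg hB]
  have hconv := hwindep.ae_of_ae_ae (measurable_pi_lambda _ hwmeas) (measurable_pi_lambda _ hX)
    (measurableSet_setOf_tendsto_weightedAvg hf (∫ y, (y - μ) ^ 2 ∂F)) ?_
  · filter_upwards [hconv] with ω hω
    simp only [hclean]
    exact hω
  · filter_upwards [hfrac] with ω hω
    exact ae_tendsto_weightedAvg_comp hXlaw (hindep.comp _ fun _ => measurable_fst) hf hfi
      (hw01 · ω) (infinite_setOf_eq_one_of_tendsto_avg (hw01 · ω) hc hω)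
end
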